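/- Let I be a monomial ideal with a regular linear quotient, u ∈ G(I), and fix σ ⊆ 𝔮(u). For δ ⊆ σ define c_σ(δ) to be the largest subset τ of σ with 𝔤(δ;u) = 𝔤(τ;u). Then (σ, c_σ) is a convex geometry: c_σ is a closure operator on σ satisfying the anti-exchange axiom. -/

import Mathlib

/-!
Write `G τ` for the index of `𝔤(τ;u)`. Then `c_σ δ` is the largest `τ ⊆ σ` in the fibre of `G`
through `δ`, and the convex-geometry axioms only need three properties of `G`: it is antitone,
`G τ = G τ'` forces `G (τ ∩ τ') = G τ`, and an element `y` absorbed by `δ` (`G (δ ∪ y) = G δ`) stays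
absorbed by every larger set. The first two hold for any decomposition function. The third uses
regularity: were `y` absorbed by `δ` but not by `δ ∪ a`, consider the generators `u_r` dividing
`u x_{δ ∪ a}` with `𝔮(u_r) ⊆ 𝔮(𝔤(δ;u))`. Each of them lies strictly above `𝔤(δ ∪ {a, y};u)` in the
order, so the linear quotient provides `x ∈ 𝔮(u_r)` with `u_r x ∣ u x_{δ ∪ {a, y}}`, and
`𝔤(u_r x)` is a smaller such generator unless `x = y`. At a minimal one therefore
`y ∈ 𝔮(𝔤(δ;u))`, so `𝔤(δ ∪ y;u) ∣ 𝔤(δ;u) y` comes strictly before `𝔤(δ;u)`: `y` was not absorbed.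
-/

open Finset

section FiberClosure

variable {α ι : Type*} {G : Finset α → ι}

def IsFiberClosure (G : Finset α → ι) (σ : Finset α) (c : Finset α → Finset α) : Prop :=
  ∀ δ ⊆ σ, IsGreatest {τ | τ ⊆ σ ∧ G τ = G δ} (c δ)

namespace IsFiberClosure

variable {σ δ τ : Finset α} {c : Finset α → Finset α}

theorem self_subset (hc : IsFiberClosure G σ c) (hδ : δ ⊆ σ) : δ ⊆ c δ :=
  (hc δ hδ).2 ⟨hδ, rfl⟩

theorem closure_subset (hc : IsFiberClosure G σ c) (hδ : δ ⊆ σ) : c δ ⊆ σ :=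
  (hc δ hδ).1.1

theorem apply_closure (hc : IsFiberClosure G σ c) (hδ : δ ⊆ σ) : G (c δ) = G δ :=
  (hc δ hδ).1.2

theorem idem (hc : IsFiberClosure G σ c) (hδ : δ ⊆ σ) : c (c δ) = c δ := by
  have h := hc (c δ) (hc.closure_subset hδ)
  rw [hc.apply_closure hδ] at h
  exact h.unique (hc δ hδ)

theorem le_of_subset [Preorder ι] (hG : Antitone G) (hc : IsFiberClosure G σ c) (hδ : δ ⊆ σ)
    (hτ : τ ⊆ c δ) : G δ ≤ G τ :=
  hc.apply_closure hδ ▸ hG hτ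

end IsFiberClosure

variable [DecidableEq α]

theorem insert_eq_of_insert_eq_of_subset
    (habs : ∀ δ a y, G (insert y δ) = G δ → G (insert y (insert a δ)) = G (insert a δ))
    {δ τ : Finset α} {y : α} (hy : G (insert y δ) = G δ) (hδτ : δ ⊆ τ) :
    G (insert y τ) = G τ := by
  obtain ⟨γ, rfl⟩ : ∃ γ, τ = δ ∪ γ := ⟨τ, (union_eq_right.2 hδτ).symm⟩
  clear hδτ
  induction γ using Finset.induction_on with
  | empty => simpa using hy
  | insert a γ _ ih => rw [union_insert]; exact habs _ a y ih

theorem union_eq_of_forall_insert_eq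
    (habs : ∀ δ a y, G (insert y δ) = G δ → G (insert y (insert a δ)) = G (insert a δ))
    {τ β : Finset α} (hβ : ∀ y ∈ β, G (insert y τ) = G τ) : G (τ ∪ β) = G τ := by
  induction β using Finset.induction_on with
  | empty => simp
  | insert y β _ ih =>
    rw [union_insert, insert_eq_of_insert_eq_of_subset habs (hβ y (mem_insert_self y β))
      subset_union_left, ih fun z hz => hβ z (mem_insert_of_mem hz)]

namespace IsFiberClosure

variable {σ δ τ : Finset α} {c : Finset α → Finset α}

theorem mono [PartialOrder ι] (hG : Antitone G)
    (habs : ∀ δ a y, G (insert y δ) = G δ → G (insert y (insert a δ)) = G (insert a δ))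
    (hc : IsFiberClosure G σ c) (hδτ : δ ⊆ τ) (hτ : τ ⊆ σ) : c δ ⊆ c τ := by
  have hδ := hδτ.trans hτ
  have habsorbed : ∀ y ∈ c δ, G (insert y δ) = G δ := fun y hy =>
    le_antisymm (hG (subset_insert y δ))
      (hc.le_of_subset hG hδ (insert_subset hy (hc.self_subset hδ)))
  have hunion : G (τ ∪ c δ) = G τ := union_eq_of_forall_insert_eq habs fun y hy =>
    insert_eq_of_insert_eq_of_subset habs (habsorbed y hy) hδτ
  exact subset_union_right.trans ((hc τ hτ).2 ⟨union_subset hτ (hc.closure_subset hδ), hunion⟩)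

theorem antiExchange [PartialOrder ι] (hG : Antitone G)
    (hinter : ∀ τ τ', G τ = G τ' → G (τ ∩ τ') = G τ)
    (hc : IsFiberClosure G σ c) (hδ : δ ⊆ σ) {a b : α} (ha : a ∈ σ) (hb : b ∈ σ) (hab : a ≠ b)
    (hacδ : a ∉ c δ) (hacb : a ∈ c (insert b δ)) : b ∉ c (insert a δ) := by
  intro hbca
  have haσ := insert_subset ha hδ
  have hbσ := insert_subset hb hδ
  have hGab : G (insert a δ) = G (insert b δ) := le_antisymm
    (hc.le_of_subset hG haσ (insert_subset hbca ((subset_insert a δ).trans (hc.self_subset haσ))))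
    (hc.le_of_subset hG hbσ (insert_subset hacb ((subset_insert b δ).trans (hc.self_subset hbσ))))
  have hinsert_inter : insert a δ ∩ insert b δ = δ := by
    ext x
    simp only [mem_inter, mem_insert]
    grind
  have hGa : G (insert a δ) = G δ := by rw [← hinter _ _ hGab, hinsert_inter]
  exact hacδ ((hc δ hδ).2 ⟨haσ, hGa⟩ (mem_insert_self a δ))

end IsFiberClosure

end FiberClosure

section LinearQuotient

/-! Monomials are exponent vectors `α → ℕ`, so `u i ≤ v` means `u i ∣ v`, and `g v` is the index
of the generator `𝔤(v)`. -/

variable {α ι : Type*}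

def IsDecompositionFun [LE ι] (u : ι → α → ℕ) (g : (α → ℕ) → ι) : Prop :=
  ∀ v, (∃ i, u i ≤ v) → IsLeast {i | u i ≤ v} (g v)

namespace IsDecompositionFun

variable {u : ι → α → ℕ} {g : (α → ℕ) → ι} {v : α → ℕ} {i : ι}

theorem apply_le [LE ι] (hg : IsDecompositionFun u g) (hi : u i ≤ v) : g v ≤ i :=
  (hg v ⟨i, hi⟩).2 hi

theorem comp_le [LE ι] (hg : IsDecompositionFun u g) (hi : u i ≤ v) : u (g v) ≤ v :=
  (hg v ⟨i, hi⟩).1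

end IsDecompositionFun

variable [DecidableEq α]

def mulVar (v : α → ℕ) (x : α) : α → ℕ := fun t => v t + if t = x then 1 else 0

def mulVars (v : α → ℕ) (τ : Finset α) : α → ℕ := fun t => v t + if t ∈ τ then 1 else 0

variable {v w : α → ℕ} {x y : α} {τ τ' : Finset α}

theorem le_mulVar : v ≤ mulVar v x := fun _ => Nat.le_add_right _ _

theorem le_mulVars : v ≤ mulVars v τ := fun _ => Nat.le_add_right _ _

theorem mulVars_mono : Monotone (mulVars v) := fun τ τ' h t => by
  by_cases ht : t ∈ τ
  · simp [mulVars, ht, h ht]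
  · simp [mulVars, ht]

theorem mulVars_inter : mulVars v (τ ∩ τ') = mulVars v τ ⊓ mulVars v τ' := by
  funext t
  simp only [mulVars, Pi.inf_apply, mem_inter]
  split_ifs <;> simp_all

theorem mulVar_le_mulVars_insert (h : v ≤ mulVars w τ) (hy : y ∉ τ) :
    mulVar v y ≤ mulVars w (insert y τ) := fun t => by
  have := h t
  simp only [mulVar, mulVars, mem_insert] at this ⊢
  split_ifs at this ⊢ <;> simp_all

theorem mulVar_le_mulVars_of_ne (h : v ≤ mulVars w τ) (hx : mulVar v x ≤ mulVars w (insert y τ))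
    (hxy : x ≠ y) : mulVar v x ≤ mulVars w τ := fun t => by
  have h₁ := h t
  have h₂ := hx t
  simp only [mulVar, mulVars, mem_insert] at h₁ h₂ ⊢
  split_ifs at h₁ h₂ ⊢ <;> simp_all

namespace IsDecompositionFun

variable {u : ι → α → ℕ} {g : (α → ℕ) → ι}

theorem antitone [Preorder ι] (hg : IsDecompositionFun u g) (j : ι) :
    Antitone fun τ => g (mulVars (u j) τ) := fun _ _ h =>
  hg.apply_le ((hg.comp_le le_mulVars).trans (mulVars_mono h))

theorem inter_eq [PartialOrder ι] (hg : IsDecompositionFun u g) (j : ι)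
    (h : g (mulVars (u j) τ) = g (mulVars (u j) τ')) :
    g (mulVars (u j) (τ ∩ τ')) = g (mulVars (u j) τ) := by
  refine le_antisymm (hg.apply_le ?_) (hg.antitone j inter_subset_left)
  rw [mulVars_inter]
  exact le_inf (hg.comp_le le_mulVars) (h ▸ hg.comp_le le_mulVars)

end IsDecompositionFun

/-- `q j` is `𝔮(u_j)`: `⟨u_i : i < j⟩ : u_j = ⟨q j⟩`, tested on monomials `w`. -/
structure IsRegularLinearQuotient [LinearOrder ι] (u : ι → α → ℕ) (q : ι → Finset α)
    (g : (α → ℕ) → ι) : Prop where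
  colon_iff : ∀ j w, (∃ i < j, u i ≤ w + u j) ↔ ∃ x ∈ q j, 1 ≤ w x
  decomp : IsDecompositionFun u g
  regular : ∀ j, ∀ y ∈ q j, q (g (mulVar (u j) y)) ⊆ q j

namespace IsRegularLinearQuotient

variable [LinearOrder ι] {u : ι → α → ℕ} {q : ι → Finset α} {g : (α → ℕ) → ι} {k r : ι}

theorem apply_mulVar_lt (h : IsRegularLinearQuotient u q g) (hx : x ∈ q r) :
    g (mulVar (u r) x) < r := by
  obtain ⟨i, hir, hi⟩ := (h.colon_iff r fun t => if t = x then 1 else 0).2 ⟨x, hx, by simp⟩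
  exact (h.decomp.apply_le fun t => (hi t).trans_eq (add_comm _ _)).trans_lt hir

theorem exists_mem_mulVar_le (h : IsRegularLinearQuotient u q g) (hk : u k ≤ v) (hr : u r ≤ v)
    (hkr : k < r) : ∃ x ∈ q r, mulVar (u r) x ≤ v := by
  obtain ⟨x, hx, hvx⟩ := (h.colon_iff r (v - u r)).1 ⟨k, hkr, by rwa [tsub_add_cancel_of_le hr]⟩
  refine ⟨x, hx, fun t => ?_⟩
  have hrt := hr t
  have hrx := hr x
  simp only [Pi.sub_apply] at hvx
  simp only [mulVar]
  split_ifs with htx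
  · subst htx; omega
  · simpa using hrt

theorem apply_mulVars_insert_lt (h : IsRegularLinearQuotient u q g) (j : ι) {δ : Finset α}
    (hy : y ∈ q (g (mulVars (u j) δ))) (hyδ : y ∉ δ) :
    g (mulVars (u j) (insert y δ)) < g (mulVars (u j) δ) :=
  (h.decomp.apply_le ((h.decomp.comp_le le_mulVar).trans
    (mulVar_le_mulVars_insert (h.decomp.comp_le le_mulVars) hyδ))).trans_lt
    (h.apply_mulVar_lt hy)

theorem apply_mulVars_insert_insert_eq [WellFoundedLT ι] (h : IsRegularLinearQuotient u q g)
    (j : ι) {δ : Finset α} {a : α} (hy : g (mulVars (u j) (insert y δ)) = g (mulVars (u j) δ)) :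
    g (mulVars (u j) (insert y (insert a δ))) = g (mulVars (u j) (insert a δ)) := by
  by_cases hya : y ∈ insert a δ
  · rw [insert_eq_of_mem hya]
  have hyδ : y ∉ δ := fun hyδ => hya (mem_insert_of_mem hyδ)
  set A := mulVars (u j) (insert a δ)
  set p := g (mulVars (u j) δ)
  refine le_antisymm (h.decomp.antitone j (subset_insert _ _)) (not_lt.1 fun hlt => ?_)
  obtain ⟨r, ⟨hrA, hrq⟩, hmin⟩ := wellFounded_lt.has_min {r | u r ≤ A ∧ q r ⊆ q p}
    ⟨p, (h.decomp.comp_le le_mulVars).trans (mulVars_mono (subset_insert _ _)), subset_rfl⟩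
  obtain ⟨x, hxq, hxB⟩ := h.exists_mem_mulVar_le (h.decomp.comp_le le_mulVars)
    (hrA.trans (mulVars_mono (subset_insert _ _))) (hlt.trans_le (h.decomp.apply_le hrA))
  by_cases hxA : mulVar (u r) x ≤ A
  · exact hmin _ ⟨(h.decomp.comp_le le_mulVar).trans hxA, (h.regular r x hxq).trans hrq⟩
      (h.apply_mulVar_lt hxq)
  · obtain rfl : x = y := by_contra fun hxy => hxA (mulVar_le_mulVars_of_ne hrA hxB hxy)
    exact (h.apply_mulVars_insert_lt j (hrq hxq) hyδ).ne hy

end IsRegularLinearQuotient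

end LinearQuotient

theorem convex_geometry_restricted_general (n m : ℕ) (u : Fin m → Fin n → ℕ)
    (q : Fin m → Finset (Fin n)) (g : (Fin n → ℕ) → Fin m)
    (hq : ∀ j : Fin m, ∀ w : Fin n → ℕ,
      ((∃ i, i < j ∧ ∀ t, u i t ≤ w t + u j t) ↔ ∃ x ∈ q j, 1 ≤ w x))
    (hg : ∀ v : Fin n → ℕ, (∃ i, ∀ t, u i t ≤ v t) →
      ((∀ t, u (g v) t ≤ v t) ∧ ∀ i, (∀ t, u i t ≤ v t) → g v ≤ i))
    (hreg : ∀ j : Fin m, ∀ y ∈ q j,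
      q (g (fun t => u j t + if t = y then 1 else 0)) ⊆ q j)
    (j : Fin m) (σ : Finset (Fin n))
    (c : Finset (Fin n) → Finset (Fin n))
    (hc : ∀ δ, δ ⊆ σ → (c δ ⊆ σ ∧
      g (fun t => u j t + if t ∈ c δ then 1 else 0)
        = g (fun t => u j t + if t ∈ δ then 1 else 0) ∧
      ∀ τ, τ ⊆ σ →
        g (fun t => u j t + if t ∈ τ then 1 else 0)
          = g (fun t => u j t + if t ∈ δ then 1 else 0) → τ ⊆ c δ)) :
    (∀ δ, δ ⊆ σ → δ ⊆ c δ) ∧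
    (∀ δ τ, δ ⊆ τ → τ ⊆ σ → c δ ⊆ c τ) ∧
    (∀ δ, δ ⊆ σ → c (c δ) = c δ) ∧
    (∀ δ, δ ⊆ σ → ∀ a ∈ σ, ∀ b ∈ σ, a ≠ b →
      a ∉ c δ → b ∉ c δ → a ∈ c (insert b δ) → b ∉ c (insert a δ)) := by
  have h : IsRegularLinearQuotient u q g := ⟨hq, hg, hreg⟩
  have hcl : IsFiberClosure (fun τ => g (mulVars (u j) τ)) σ c := fun δ hδ =>
    ⟨⟨(hc δ hδ).1, (hc δ hδ).2.1⟩, fun τ hτ => (hc δ hδ).2.2 τ hτ.1 hτ.2⟩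
  have hG := h.decomp.antitone j
  refine ⟨fun _ => hcl.self_subset, fun _ _ => ?_, fun _ => hcl.idem, ?_⟩
  · exact hcl.mono hG fun _ _ _ => h.apply_mulVars_insert_insert_eq j
  · intro _ hδ _ ha _ hb hab hacδ _
    exact hcl.antiExchange hG (fun _ _ => h.decomp.inter_eq j) hδ ha hb hab hacδ

/-- Setup as in the paper.  For a fixed `σ ⊆ 𝔮(u_j)`, the operator
`c_σ δ` = largest `τ ⊆ σ` with `𝔤(δ;u_j) = 𝔤(τ;u_j)` makes `(σ, c_σ)` a
convex geometry: `c_σ` is a closure operator satisfying anti-exchange. -/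
theorem convex_geometry_restricted (n m : ℕ) (u : Fin m → Fin n → ℕ)
    (q : Fin m → Finset (Fin n)) (g : (Fin n → ℕ) → Fin m)
    (hq : ∀ j : Fin m, ∀ w : Fin n → ℕ,
      ((∃ i, i < j ∧ ∀ t, u i t ≤ w t + u j t) ↔ ∃ x ∈ q j, 1 ≤ w x))
    (hg : ∀ v : Fin n → ℕ, (∃ i, ∀ t, u i t ≤ v t) →
      ((∀ t, u (g v) t ≤ v t) ∧ ∀ i, (∀ t, u i t ≤ v t) → g v ≤ i))
    (hreg : ∀ j : Fin m, ∀ y ∈ q j,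
      q (g (fun t => u j t + if t = y then 1 else 0)) ⊆ q j)
    (j : Fin m) (σ : Finset (Fin n)) (hσ : σ ⊆ q j)
    (c : Finset (Fin n) → Finset (Fin n))
    (hc : ∀ δ, δ ⊆ σ → (c δ ⊆ σ ∧
      g (fun t => u j t + if t ∈ c δ then 1 else 0)
        = g (fun t => u j t + if t ∈ δ then 1 else 0) ∧
      ∀ τ, τ ⊆ σ →
        g (fun t => u j t + if t ∈ τ then 1 else 0)
          = g (fun t => u j t + if t ∈ δ then 1 else 0) → τ ⊆ c δ)) :
    (∀ δ, δ ⊆ σ → δ ⊆ c δ) ∧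
    (∀ δ τ, δ ⊆ τ → τ ⊆ σ → c δ ⊆ c τ) ∧
    (∀ δ, δ ⊆ σ → c (c δ) = c δ) ∧
    (∀ δ, δ ⊆ σ → ∀ a ∈ σ, ∀ b ∈ σ, a ≠ b →
      a ∉ c δ → b ∉ c δ → a ∈ c (insert b δ) → b ∉ c (insert a δ)) :=
  convex_geometry_restricted_general n m u q g hq hg hreg j σ c hc
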